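/- Let Y and Z be nonzero real Banach spaces, let 1 ≤ p < ∞, and let X = Y ⊕_p Z. Then t(X) ≥ ((t(Y) − 1)^p + 1)^{1/p}. -/

import Mathlib

open ENNReal
/-- The thinness index `t(X)` of a normed space. -/
noncomputable def thinness (X : Type*) [NormedAddCommGroup X] : ℝ :=
  sInf {r : ℝ | 0 < r ∧ ∀ (n : ℕ) (x : Fin n → X), (∀ i, ‖x i‖ = 1) →
    ∀ ε : ℝ, 0 < ε → ∃ y : X, ‖y‖ = 1 ∧ ∀ i, ‖x i - y‖ < r + ε}

/-!
Let `r` be admissible for `X = Y ⊕_p Z` and let `y₁, …, yₙ` be unit vectors of `Y`. A unit vector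
`u = (a, b)` of `X` with `‖(yᵢ, 0) - u‖ ≲ r` satisfies `‖yᵢ - a‖^p ≲ r^p - 1 + ‖a‖^p`, so
`‖yᵢ - a‖ ≲ (r^p - 1)^(1/p) + ‖a‖`; moving `a` radially to the unit sphere costs `1 - ‖a‖`.
Hence `t(Y) ≤ 1 + (r^p - 1)^(1/p)`, which inverts to `((t(Y) - 1)^p + 1)^(1/p) ≤ r`.
-/

open Filter Topology

-- `thinness E` is the infimum of the positive `r` with `ThinnessBound E r`.
def ThinnessBound (E : Type*) [NormedAddCommGroup E] (r : ℝ) : Prop :=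
  ∀ (n : ℕ) (x : Fin n → E), (∀ i, ‖x i‖ = 1) →
    ∀ ε : ℝ, 0 < ε → ∃ y : E, ‖y‖ = 1 ∧ ∀ i, ‖x i - y‖ < r + ε

namespace Real

theorem rpow_add_rpow_rpow_inv_le {A t q : ℝ} (hA : 0 ≤ A) (ht : 0 ≤ t) (hq : 1 ≤ q) :
    (A + t ^ q) ^ (1 / q) ≤ A ^ (1 / q) + t := by
  have hq0 : 0 < q := one_pos.trans_le hq
  calc (A + t ^ q) ^ (1 / q) ≤ A ^ (1 / q) + (t ^ q) ^ (1 / q) :=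
        rpow_add_le_add_rpow hA (by positivity) (by positivity)
          ((div_le_one hq0).2 hq)
    _ = A ^ (1 / q) + t := by rw [one_div, rpow_rpow_inv ht hq0.ne']

theorem rpow_add_one_rpow_inv_le {s r q : ℝ} (hs : 0 ≤ s) (hr : 1 ≤ r) (hq : 0 < q)
    (h : s ≤ (r ^ q - 1) ^ (1 / q)) : (s ^ q + 1) ^ (1 / q) ≤ r := by
  have hrq : 1 ≤ r ^ q := one_le_rpow hr hq.le
  have hsq : s ^ q ≤ r ^ q - 1 := by
    calc s ^ q ≤ ((r ^ q - 1) ^ (1 / q)) ^ q := rpow_le_rpow hs h hq.le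
      _ = r ^ q - 1 := by rw [one_div, rpow_inv_rpow (by linarith) hq.ne']
  calc (s ^ q + 1) ^ (1 / q) ≤ (r ^ q) ^ (1 / q) :=
        rpow_le_rpow (by positivity) (by linarith) (by positivity)
    _ = r := by rw [one_div, rpow_rpow_inv (by linarith) hq.ne']

end Real

section Thinness

variable {E : Type*} [NormedAddCommGroup E]

theorem thinness_le {r : ℝ} (hr : ThinnessBound E r) (h0 : 0 < r) : thinness E ≤ r :=
  csInf_le ⟨0, fun _ h => h.1.le⟩ ⟨h0, hr⟩

variable [NormedSpace ℝ E] [Nontrivial E]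

theorem thinnessBound_two : ThinnessBound E 2 := by
  intro n x hx ε hε
  cases n with
  | zero =>
    obtain ⟨e, he⟩ := exists_norm_eq E zero_le_one
    exact ⟨e, he, fun i => i.elim0⟩
  | succ m =>
    refine ⟨-x 0, by rw [norm_neg, hx 0], fun i => ?_⟩
    calc ‖x i - -x 0‖ ≤ ‖x i‖ + ‖x 0‖ := by rw [sub_neg_eq_add]; exact norm_add_le _ _
      _ < 2 + ε := by rw [hx i, hx 0]; linarith

theorem ThinnessBound.one_le {r : ℝ} (hr : ThinnessBound E r) : 1 ≤ r := by
  obtain ⟨e, he⟩ := exists_norm_eq E zero_le_one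
  refine le_of_forall_pos_lt_add fun ε hε => ?_
  obtain ⟨y, -, hy⟩ := hr 2 ![e, -e] (by simp [Fin.forall_fin_two, he]) ε hε
  have h2 : (2 : ℝ) ≤ ‖e - y‖ + ‖-e - y‖ := by
    calc (2 : ℝ) = ‖(e - y) - (-e - y)‖ := by
          rw [show (e - y) - (-e - y) = (2 : ℝ) • e by module, norm_smul, he]; norm_num
      _ ≤ ‖e - y‖ + ‖-e - y‖ := norm_sub_le _ _
  have h0 := hy 0
  have h1 := hy 1
  simp only [Matrix.cons_val_zero, Matrix.cons_val_one] at h0 h1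
  linarith

theorem le_thinness {c : ℝ} (h : ∀ r, ThinnessBound E r → c ≤ r) : c ≤ thinness E :=
  le_csInf ⟨2, two_pos, thinnessBound_two⟩ fun r hr => h r hr.2

theorem one_le_thinness : 1 ≤ thinness E :=
  le_thinness fun _ => ThinnessBound.one_le

theorem exists_norm_eq_one_norm_sub_eq {a : E} (ha : ‖a‖ ≤ 1) :
    ∃ e : E, ‖e‖ = 1 ∧ ‖a - e‖ = 1 - ‖a‖ := by
  rcases eq_or_ne a 0 with rfl | ha0
  · obtain ⟨e, he⟩ := exists_norm_eq E zero_le_one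
    exact ⟨e, he, by simp [he]⟩
  · have hpos : 0 < ‖a‖ := norm_pos_iff.2 ha0
    refine ⟨‖a‖⁻¹ • a, by rw [norm_smul, norm_inv, norm_norm, inv_mul_cancel₀ hpos.ne'], ?_⟩
    rw [show a - ‖a‖⁻¹ • a = (1 - ‖a‖⁻¹) • a by module, norm_smul, Real.norm_eq_abs,
      abs_of_nonpos (by linarith [(one_le_inv₀ hpos).2 ha])]
    field_simp
    ring

end Thinness

namespace WithLp

variable {p : ℝ≥0∞} [Fact (1 ≤ p)] {Y Z : Type*} [NormedAddCommGroup Y] [NormedAddCommGroup Z]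

theorem prod_norm_rpow_eq_add (hp : p ≠ ⊤) (u : WithLp p (Y × Z)) :
    ‖u‖ ^ p.toReal = ‖u.fst‖ ^ p.toReal + ‖u.snd‖ ^ p.toReal := by
  have hp0 : 0 < p.toReal := one_pos.trans_le ((ENNReal.dichotomy p).resolve_left hp)
  rw [prod_norm_eq_add hp0, one_div, Real.rpow_inv_rpow (by positivity) hp0.ne']

variable [NormedSpace ℝ Y] [Nontrivial Y]

/-- The unit vector `e` is the first coordinate of `u`, pushed radially to the unit sphere. -/
theorem exists_norm_sub_le_of_norm_toLp_sub_le (hp : p ≠ ⊤) {u : WithLp p (Y × Z)}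
    (hu : ‖u‖ = 1) : ∃ e : Y, ‖e‖ = 1 ∧ ∀ (y : Y) (R : ℝ), 1 ≤ R →
      ‖toLp p (y, (0 : Z)) - u‖ ≤ R → ‖y - e‖ ≤ 1 + (R ^ p.toReal - 1) ^ (1 / p.toReal) := by
  have hq : 1 ≤ p.toReal := (ENNReal.dichotomy p).resolve_left hp
  have hq0 : 0 < p.toReal := one_pos.trans_le hq
  obtain ⟨e, he, hae⟩ := exists_norm_eq_one_norm_sub_eq ((norm_fst_le Y u).trans hu.le)
  refine ⟨e, he, fun y R hR hyu => ?_⟩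
  have hsplit : ‖y - u.fst‖ ^ p.toReal + ‖u.snd‖ ^ p.toReal ≤ R ^ p.toReal := by
    simpa [prod_norm_rpow_eq_add hp] using Real.rpow_le_rpow (norm_nonneg _) hyu hq0.le
  have hunit : ‖u.fst‖ ^ p.toReal + ‖u.snd‖ ^ p.toReal = 1 := by
    rw [← prod_norm_rpow_eq_add hp, hu, Real.one_rpow]
  set q := p.toReal
  have hRq : 0 ≤ R ^ q - 1 := sub_nonneg.2 (Real.one_le_rpow hR hq0.le)
  have hfst : ‖y - u.fst‖ ≤ (R ^ q - 1) ^ (1 / q) + ‖u.fst‖ :=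
    calc ‖y - u.fst‖ = (‖y - u.fst‖ ^ q) ^ (1 / q) := by
          rw [one_div, Real.rpow_rpow_inv (norm_nonneg _) hq0.ne']
      _ ≤ (R ^ q - 1 + ‖u.fst‖ ^ q) ^ (1 / q) :=
          Real.rpow_le_rpow (by positivity) (by linarith) (by positivity)
      _ ≤ (R ^ q - 1) ^ (1 / q) + ‖u.fst‖ := Real.rpow_add_rpow_rpow_inv_le hRq (norm_nonneg _) hq
  calc ‖y - e‖ ≤ ‖y - u.fst‖ + ‖u.fst - e‖ := norm_sub_le_norm_sub_add_norm_sub _ _ _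
    _ ≤ 1 + (R ^ q - 1) ^ (1 / q) := by linarith

end WithLp

theorem ThinnessBound.of_prodLp {p : ℝ≥0∞} [Fact (1 ≤ p)] (hp : p ≠ ⊤) {Y Z : Type*}
    [NormedAddCommGroup Y] [NormedSpace ℝ Y] [Nontrivial Y] [NormedAddCommGroup Z]
    [NormedSpace ℝ Z] {r : ℝ} (hr : ThinnessBound (WithLp p (Y × Z)) r) :
    ThinnessBound Y (1 + (r ^ p.toReal - 1) ^ (1 / p.toReal)) := by
  set f : ℝ → ℝ := fun R => 1 + (R ^ p.toReal - 1) ^ (1 / p.toReal)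
  intro n y hy ε hε
  have hf : ContinuousAt f r := by fun_prop (disch := positivity)
  have hev : ∀ᶠ R in 𝓝[>] r, f R < f r + ε :=
    (hf.eventually (gt_mem_nhds (lt_add_of_pos_right (f r) hε))).filter_mono nhdsWithin_le_nhds
  obtain ⟨R, hfR, hrR⟩ := (hev.and self_mem_nhdsWithin).exists
  obtain ⟨u, hu, hyu⟩ := hr n (fun i => WithLp.toLp p (y i, 0)) (fun i => by simp [hy i])
    (R - r) (sub_pos.2 hrR)
  obtain ⟨e, he, hdist⟩ := WithLp.exists_norm_sub_le_of_norm_toLp_sub_le hp hu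
  refine ⟨e, he, fun i => (hdist (y i) R ?_ ?_).trans_lt hfR⟩
  · linarith [hr.one_le]
  · linarith [hyu i]

theorem thinness_prodLp_ge (p : ℝ≥0∞) [Fact (1 ≤ p)] (hp : p ≠ ⊤)
    (Y Z : Type*) [NormedAddCommGroup Y] [NormedSpace ℝ Y] [Nontrivial Y]
    [NormedAddCommGroup Z] [NormedSpace ℝ Z] :
    ((thinness Y - 1) ^ p.toReal + 1) ^ (1 / p.toReal) ≤ thinness (WithLp p (Y × Z)) := by
  have hq0 : 0 < p.toReal := one_pos.trans_le ((ENNReal.dichotomy p).resolve_left hp)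
  refine le_thinness fun r hr => Real.rpow_add_one_rpow_inv_le
    (sub_nonneg.2 one_le_thinness) hr.one_le hq0 ?_
  have hrq : 0 ≤ r ^ p.toReal - 1 := sub_nonneg.2 (Real.one_le_rpow hr.one_le hq0.le)
  have hY := thinness_le (hr.of_prodLp hp) (by positivity)
  linarith
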